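/- For every x with 1/2 < x ≤ 1897/3762, the first three generated terms of the M&m sequence started from (0, x, 1) are x₄ = 3x − 1, x₅ = 6x − 5/2, x₆ = 8x − 7/2, and they satisfy the ordering 0 < x < 3x − 1 < 6x − 5/2 < 8x − 7/2 < 1. -/

import Mathlib

open Finset Filter

/-- The median of a finite list of reals: the middle element of the sorted list
if the length is odd, and the average of the two middle elements if it is even. -/
noncomputable def med (l : List ℝ) : ℝ :=
  let s := l.insertionSort (· ≤ ·)
  if l.length % 2 = 1 then s.getD (l.length / 2) 0
  else (s.getD (l.length / 2 - 1) 0 + s.getD (l.length / 2) 0) / 2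

/-- The list of the first `n` terms `X 1, …, X n`. -/
def firstTerms (X : ℕ → ℝ) (n : ℕ) : List ℝ := (List.range' 1 n).map X

/-- The median `m_n` of the first `n` terms. -/
noncomputable def medn (X : ℕ → ℝ) (n : ℕ) : ℝ := med (firstTerms X n)

/-- `X` is the M&m sequence generated from the starting triple `(a, b, c)`:
`x_n = n · med(x_1,…,x_{n-1}) − (x_1 + ⋯ + x_{n-1})` for `n ≥ 4`. -/
def IsMnM (a b c : ℝ) (X : ℕ → ℝ) : Prop :=
  X 1 = a ∧ X 2 = b ∧ X 3 = c ∧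
  ∀ n, 4 ≤ n → X n = n * medn X (n - 1) - ∑ j ∈ Finset.Icc 1 (n - 1), X j

/-! Adding `x_{n+1}` makes the mean of the first `n + 1` terms equal to `m_n`. For
`1/2 ≤ x ≤ 7/12` the new terms `3x − 1` and `6x − 5/2` land between `x` and `1`, so the
medians `m_3, m_4, m_5` are `x`, `2x − 1/2` and `3x − 1`, which gives the three formulas; the
strict ordering is then linear arithmetic in `x`. -/

theorem List.insertionSort_le_eq_of_perm {α : Type*} [LinearOrder α] {l l' : List α}
    (h : l.Perm l') : l.insertionSort (· ≤ ·) = l'.insertionSort (· ≤ ·) :=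
  List.Perm.eq_of_sortedLE List.sortedLE_insertionSort List.sortedLE_insertionSort
    (((List.perm_insertionSort _ l).trans h).trans (List.perm_insertionSort _ l').symm)

theorem med_eq_of_perm {l l' : List ℝ} (h : l.Perm l') : med l = med l' := by
  simp only [med, List.insertionSort_le_eq_of_perm h, h.length_eq]

theorem med_of_pairwise {l : List ℝ} (hl : l.Pairwise (· ≤ ·)) :
    med l = if l.length % 2 = 1 then l.getD (l.length / 2) 0
      else (l.getD (l.length / 2 - 1) 0 + l.getD (l.length / 2) 0) / 2 := by
  rw [med, hl.insertionSort_eq]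

theorem med_three {a b c : ℝ} (hab : a ≤ b) (hbc : b ≤ c) : med [a, b, c] = b := by
  rw [med_of_pairwise (by simp [hab, hbc, hab.trans hbc])]
  simp

theorem med_four {a b c d : ℝ} (hab : a ≤ b) (hbc : b ≤ c) (hcd : c ≤ d) :
    med [a, b, c, d] = (b + c) / 2 := by
  rw [med_of_pairwise (by simp [hab, hbc, hcd, hab.trans hbc, hbc.trans hcd,
    (hab.trans hbc).trans hcd])]
  simp

theorem med_five {a b c d e : ℝ} (hab : a ≤ b) (hbc : b ≤ c) (hcd : c ≤ d) (hde : d ≤ e) :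
    med [a, b, c, d, e] = c := by
  have hac := hab.trans hbc
  have hbd := hbc.trans hcd
  have hce := hcd.trans hde
  rw [med_of_pairwise (by simp [hab, hbc, hcd, hde, hac, hbd, hce, hac.trans hcd,
    hbd.trans hde, hac.trans hce])]
  simp

theorem firstTerms_succ (X : ℕ → ℝ) (n : ℕ) :
    firstTerms X (n + 1) = firstTerms X n ++ [X (n + 1)] := by
  simp [firstTerms, List.range'_concat, add_comm]

theorem IsMnM.firstTerms_three {a b c : ℝ} {X : ℕ → ℝ} (h : IsMnM a b c X) :
    firstTerms X 3 = [a, b, c] := by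
  simp [firstTerms, List.range', h.1, h.2.1, h.2.2.1]

theorem IsMnM.sum_Icc_three {a b c : ℝ} {X : ℕ → ℝ} (h : IsMnM a b c X) :
    ∑ j ∈ Icc 1 3, X j = a + b + c := by
  simp [sum_Icc_succ_top, h.1, h.2.1, h.2.2.1, add_assoc]

theorem IsMnM.eq_mul_medn_sub_sum {a b c : ℝ} {X : ℕ → ℝ} (h : IsMnM a b c X) {n : ℕ}
    (hn : 3 ≤ n) : X (n + 1) = (n + 1) * medn X n - ∑ j ∈ Icc 1 n, X j := by
  simpa using h.2.2.2 (n + 1) (by omega)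

theorem IsMnM.terms_four_five_six {x : ℝ} {X : ℕ → ℝ} (h : IsMnM 0 x 1 X) (hx : 1 / 2 ≤ x)
    (hx' : x ≤ 7 / 12) : X 4 = 3 * x - 1 ∧ X 5 = 6 * x - 5 / 2 ∧ X 6 = 8 * x - 7 / 2 := by
  have hm3 : medn X 3 = x := by
    rw [medn, h.firstTerms_three, med_three (by linarith) (by linarith)]
  have e4 : X 4 = 3 * x - 1 := by
    rw [h.eq_mul_medn_sub_sum le_rfl, hm3, h.sum_Icc_three]; ring
  have ht4 : firstTerms X 4 = [0, x, 1, 3 * x - 1] := by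
    rw [firstTerms_succ, h.firstTerms_three, e4]; rfl
  have hS4 : ∑ j ∈ Icc 1 4, X j = 4 * x := by
    rw [sum_Icc_succ_top (by norm_num), h.sum_Icc_three, e4]; ring
  have hm4 : medn X 4 = 2 * x - 1 / 2 := by
    rw [medn, ht4, med_eq_of_perm (l' := [0, x, 3 * x - 1, 1]) (.cons _ <| .cons _ <| .swap _ _ _),
      med_four (by linarith) (by linarith) (by linarith)]
    ring
  have e5 : X 5 = 6 * x - 5 / 2 := by rw [h.eq_mul_medn_sub_sum (by norm_num), hm4, hS4]; ring
  have ht5 : firstTerms X 5 = [0, x, 1, 3 * x - 1, 6 * x - 5 / 2] := by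
    rw [firstTerms_succ, ht4, e5]; rfl
  have hS5 : ∑ j ∈ Icc 1 5, X j = 10 * x - 5 / 2 := by
    rw [sum_Icc_succ_top (by norm_num), hS4, e5]; ring
  have hm5 : medn X 5 = 3 * x - 1 := by
    rw [medn, ht5, med_eq_of_perm (l' := [0, x, 3 * x - 1, 6 * x - 5 / 2, 1])
      (.cons _ <| .cons _ <| List.perm_append_comm (l₁ := [1])),
      med_five (by linarith) (by linarith) (by linarith) (by linarith)]
  have e6 : X 6 = 8 * x - 7 / 2 := by rw [h.eq_mul_medn_sub_sum (by norm_num), hm5, hS5]; ring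
  exact ⟨e4, e5, e6⟩

theorem mnm_first_terms_near_half (x : ℝ) (hx : 1/2 < x) (hx' : x ≤ 1897/3762)
    (X : ℕ → ℝ) (h : IsMnM 0 x 1 X) :
    X 4 = 3 * x - 1 ∧ X 5 = 6 * x - 5/2 ∧ X 6 = 8 * x - 7/2 ∧
    0 < x ∧ x < 3 * x - 1 ∧ 3 * x - 1 < 6 * x - 5/2 ∧
    6 * x - 5/2 < 8 * x - 7/2 ∧ 8 * x - 7/2 < 1 := by
  obtain ⟨e4, e5, e6⟩ := h.terms_four_five_six hx.le (by linarith)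
  exact ⟨e4, e5, e6, by linarith, by linarith, by linarith, by linarith, by linarith⟩
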